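/- Let G be an infinite non-abelian 2-group (every element has order a power of 2) with a unique element of order 2, and let A be a maximal abelian subgroup of G with at least 8 elements. Then every element of G not belonging to A has order 4, and A is a normal subgroup of index 2 in G. -/

import Mathlib

/-!
Let `z` be the unique involution. It is central, every `g ≠ 1` has a 2-power equal to `z`, and so
commuting square roots of one element agree up to `z`; for an element of order at least 4 its
square roots agree up to `z` even without commuting. Playing these rules against each other in the
group generated by two elements of order 8 shows that their squares commute, and then that each of
them lies in the cyclic group generated by the other. As `A` is abelian with a unique involution it
is locally cyclic; together with maximality this puts every element of order at least 8 into `A`,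
by induction on the order. Hence `x ^ 2 = z` for `x ∉ A`, such an `x` inverts every element of `A`,
and a product of two elements outside `A` centralises `A`, so lies in `A`: the index is 2.
-/

section

variable {G : Type*} [Group G]

theorem IsPGroup.induction_on_pow {p : ℕ} (hG : IsPGroup p G) {P : G → Prop} (n : ℕ)
    (base : ∀ g : G, g ^ p ^ n = 1 → P g) (step : ∀ g : G, g ^ p ^ n ≠ 1 → P (g ^ p) → P g)
    (g : G) : P g := by
  obtain ⟨k, hk⟩ := hG g
  induction k generalizing g with
  | zero => exact base g (by rw [pow_zero, pow_one] at hk; simp [hk])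
  | succ k ih =>
    by_cases hg : g ^ p ^ n = 1
    · exact base g hg
    · exact step g hg (ih _ (by rwa [← pow_mul, ← pow_succ']))

theorem IsPGroup.even_of_orderOf_pow_lt (hG : IsPGroup 2 G) {w : G} {t : ℕ}
    (h : orderOf (w ^ t) < orderOf w) : Even t := by
  by_contra ht
  rw [Nat.not_even_iff_odd] at ht
  rw [(hG.orderOf_coprime (Nat.coprime_two_left.mpr ht) w).orderOf_pow] at h
  exact h.false

theorem IsPGroup.pow_eq_one_of_pow_mul_eq_one {p : ℕ} (hG : IsPGroup p G) {m n : ℕ}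
    (hm : p.Coprime m) {g : G} (h : g ^ (n * m) = 1) : g ^ n = 1 :=
  (hG.powEquiv hm).injective (by simp [← pow_mul, h])

structure IsUniqueInvolution (z : G) : Prop where
  ne_one : z ≠ 1
  sq_eq_one : z ^ 2 = 1
  eq_one_or_eq_of_sq_eq_one : ∀ {w : G}, w ^ 2 = 1 → w = 1 ∨ w = z

theorem isUniqueInvolution_of_existsUnique (h : ∃! z : G, orderOf z = 2) :
    ∃ z : G, IsUniqueInvolution z := by
  obtain ⟨z, hz, hu⟩ := h
  refine ⟨z, ⟨?_, hz ▸ pow_orderOf_eq_one z, fun {w} hw => ?_⟩⟩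
  · rintro rfl
    simp at hz
  · by_cases hw1 : w = 1
    · exact .inl hw1
    · exact .inr (hu w (orderOf_eq_prime hw hw1))

namespace IsUniqueInvolution

variable {z : G}

theorem mul_self (hz : IsUniqueInvolution z) : z * z = 1 := by rw [← sq, hz.sq_eq_one]

theorem inv_eq_mul_of_sq_eq (hz : IsUniqueInvolution z) {x : G} (hx : x ^ 2 = z) : x⁻¹ = x * z :=
  inv_eq_of_mul_eq_one_right (by rw [← mul_assoc, ← sq, hx, hz.mul_self])

theorem inv_eq (hz : IsUniqueInvolution z) : z⁻¹ = z :=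
  inv_eq_of_mul_eq_one_right hz.mul_self

theorem commute (hz : IsUniqueInvolution z) (g : G) : Commute z g := by
  have hconj : (g * z * g⁻¹) ^ 2 = 1 := by rw [conj_pow, hz.sq_eq_one]; group
  rcases hz.eq_one_or_eq_of_sq_eq_one hconj with h | h
  · exact absurd (by simpa using h) hz.ne_one
  · calc z * g = g * z * g⁻¹ * g := by rw [h]
      _ = g * z := by group

theorem conj_eq (hz : IsUniqueInvolution z) (g : G) : g * z * g⁻¹ = z := by
  rw [(hz.commute g).symm.eq, mul_inv_cancel_right]

theorem eq_or_eq_mul_of_commute (hz : IsUniqueInvolution z) {g h : G} (hgh : Commute g h)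
    (hsq : g ^ 2 = h ^ 2) : h = g ∨ h = g * z := by
  have : (g⁻¹ * h) ^ 2 = 1 := by rw [hgh.inv_left.mul_pow, inv_pow, hsq, inv_mul_cancel]
  rcases hz.eq_one_or_eq_of_sq_eq_one this with h1 | h1
  · exact .inl (inv_mul_eq_one.mp h1).symm
  · exact .inr (by rw [← h1, mul_inv_cancel_left])

theorem commute_of_mul_sq_eq_one (hz : IsUniqueInvolution z) {x y : G} (h : (x * y) ^ 2 = 1) :
    Commute x y := by
  have hy : y = x⁻¹ * (x * y) := by group
  rcases hz.eq_one_or_eq_of_sq_eq_one h with h1 | h1 <;> rw [hy, h1]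
  · exact (Commute.refl x).inv_right.mul_right (Commute.one_right x)
  · exact (Commute.refl x).inv_right.mul_right (hz.commute x).symm

theorem exists_pow_pow_eq (hz : IsUniqueInvolution z) (hG : IsPGroup 2 G) {g : G} {k : ℕ}
    (hg : g ^ 2 ^ k ≠ 1) : ∃ n : ℕ, (g ^ n) ^ 2 ^ k = z := by
  obtain ⟨j, hj⟩ := IsPGroup.iff_orderOf.mp hG g
  have hkj : k < j := by
    by_contra! h
    exact hg (orderOf_dvd_iff_pow_eq_one.mp (hj ▸ pow_dvd_pow 2 h))
  refine ⟨2 ^ (j - 1 - k), ?_⟩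
  rw [← pow_mul, ← pow_add, Nat.sub_add_cancel (by omega)]
  refine (hz.eq_one_or_eq_of_sq_eq_one ?_).resolve_left fun h => ?_
  · rw [← pow_mul, ← pow_succ, Nat.sub_add_cancel (by omega), ← hj, pow_orderOf_eq_one]
  · have := orderOf_dvd_of_pow_eq_one h
    rw [hj, Nat.pow_dvd_pow_iff_le_right (by norm_num)] at this
    omega

theorem eq_or_eq_mul_of_sq_eq (hz : IsUniqueInvolution z) (hG : IsPGroup 2 G) {s t : G}
    (hst : s ^ 2 = t ^ 2) (hs : s ^ 4 ≠ 1) : t = s ∨ t = s * z := by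
  obtain ⟨u, hu⟩ : ∃ u, u = s * t⁻¹ := ⟨_, rfl⟩
  have ht : t = u⁻¹ * s := by rw [hu]; group
  have hsu : s * u * s⁻¹ = u⁻¹ :=
    calc s * u * s⁻¹ = s ^ 2 * t⁻¹ * s⁻¹ := by rw [hu, sq]; group
      _ = u⁻¹ := by rw [hst, hu, sq]; group
  by_cases hu2 : u ^ 2 = 1
  · rcases hz.eq_one_or_eq_of_sq_eq_one hu2 with h | h <;> rw [ht, h]
    · exact .inl (by group)
    · exact .inr (by rw [hz.inv_eq, hz.commute])
  -- `u ^ n` has order 4 and is inverted by `s`, yet it commutes with `s`, being `(s ^ 2) ^ m`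
  -- up to `z`
  obtain ⟨n, hn⟩ := hz.exists_pow_pow_eq hG (k := 1) (by rwa [pow_one])
  obtain ⟨m, hm⟩ := hz.exists_pow_pow_eq hG (g := s ^ 2) (k := 1) (by rwa [← pow_mul])
  have hs2u : Commute (s ^ 2) u := by
    rw [hu]
    exact (Commute.self_pow s 2).symm.mul_right
      (by rw [hst]; exact (Commute.self_pow t 2).symm.inv_right)
  have hsv : Commute s (u ^ n) := by
    rcases hz.eq_or_eq_mul_of_commute (hs2u.pow_pow m n) (by rw [pow_one] at hn hm; rw [hn, hm])
      with h | h <;> rw [h]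
    · exact (Commute.self_pow s 2).pow_right m
    · exact ((Commute.self_pow s 2).pow_right m).mul_right (hz.commute s).symm
  have hinv : s * u ^ n * s⁻¹ = (u ^ n)⁻¹ := by rw [← conj_pow, hsu, inv_pow]
  rw [hsv.eq, mul_inv_cancel_right, eq_inv_iff_mul_eq_one, ← sq] at hinv
  exact absurd (hn ▸ (pow_one 2).symm ▸ hinv) hz.ne_one

theorem orderOf_eq_four_of_sq_eq (hz : IsUniqueInvolution z) {x : G} (hx : x ^ 2 = z) :
    orderOf x = 4 :=
  orderOf_eq_prime_pow (p := 2) (n := 1) (by rw [pow_one, hx]; exact hz.ne_one)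
    (by rw [show 2 ^ (1 + 1) = 2 * 2 from rfl, pow_mul, hx, hz.sq_eq_one])

theorem conj_eq_inv_iff (hz : IsUniqueInvolution z) {g x : G} (hx : x ^ 2 = z) :
    g * x * g⁻¹ = x⁻¹ ↔ g * x = x * g * z := by
  rw [hz.inv_eq_mul_of_sq_eq hx, mul_inv_eq_iff_eq_mul, mul_assoc x z, (hz.commute g).eq,
    ← mul_assoc]

theorem conj_eq_inv_of_conj_sq_eq_inv (hz : IsUniqueInvolution z) (hG : IsPGroup 2 G) {x y : G}
    (hx : x ^ 2 = z) (hy : y ^ 4 ≠ 1) (h : x * y ^ 2 * x⁻¹ = (y ^ 2)⁻¹) : x * y * x⁻¹ = y⁻¹ := by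
  have hsq : y⁻¹ ^ 2 = (x * y * x⁻¹) ^ 2 := by rw [conj_pow, h, inv_pow]
  refine (hz.eq_or_eq_mul_of_sq_eq hG hsq (by rwa [inv_pow, inv_ne_one])).resolve_right
    fun h' => hy ?_
  have hxy : Commute x y := hz.commute_of_mul_sq_eq_one <|
    calc (x * y) ^ 2 = x * y * x⁻¹ * x ^ 2 * y := by rw [sq]; group
      _ = 1 := by rw [h', hx, mul_assoc y⁻¹, hz.mul_self, mul_one, inv_mul_cancel]
  rw [hxy.eq, mul_inv_cancel_right] at h'
  have hy2 : y ^ 2 = z := by rw [sq]; nth_rewrite 2 [h']; group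
  rw [show 4 = 2 * 2 from rfl, pow_mul, hy2, hz.sq_eq_one]

-- Anticommuting `a ^ 2` and `p ^ 2` would make `a ^ 2` invert `p` and `p ^ 2` invert `a`; these
-- relations force `(a * p) ^ 3 ∈ {1, z}`, so that `a` and `p` commute after all.
theorem sq_mul_sq_ne_of_pow_four_eq (hz : IsUniqueInvolution z) (hG : IsPGroup 2 G) {a p : G}
    (ha : a ^ 4 = z) (hp : p ^ 4 = z) : a ^ 2 * p ^ 2 ≠ p ^ 2 * a ^ 2 * z := by
  intro hiq
  obtain ⟨i, hi⟩ : ∃ i, a ^ 2 = i := ⟨_, rfl⟩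
  obtain ⟨q, hq⟩ : ∃ q, p ^ 2 = q := ⟨_, rfl⟩
  rw [hi, hq] at hiq
  have hi2 : i ^ 2 = z := by rw [← hi, ← pow_mul]; exact ha
  have hq2 : q ^ 2 = z := by rw [← hq, ← pow_mul]; exact hp
  have hqi : q * i = i * q * z := by rw [hiq, mul_assoc (q * i), hz.mul_self, mul_one]
  have hip : i * p * i⁻¹ = p⁻¹ := hz.conj_eq_inv_of_conj_sq_eq_inv hG hi2 (hp ▸ hz.ne_one)
    (by rw [hq, hz.conj_eq_inv_iff hq2, hiq])
  have hqa : q * a * q⁻¹ = a⁻¹ := hz.conj_eq_inv_of_conj_sq_eq_inv hG hq2 (ha ▸ hz.ne_one)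
    (by rw [hi, hz.conj_eq_inv_iff hi2, hqi])
  have hpi : p * i * p⁻¹ = q * i :=
    calc p * i * p⁻¹ = p * (i * p * i⁻¹)⁻¹ * i := by group
      _ = q * i := by rw [hip, inv_inv, ← hq, sq]
  have haq : a * q * a⁻¹ = i * q :=
    calc a * q * a⁻¹ = a * (q * a * q⁻¹)⁻¹ * q := by group
      _ = i * q := by rw [hqa, inv_inv, ← hi, sq]
  -- `b` and `p` are both square roots of `q`
  obtain ⟨b, hb⟩ : ∃ b, a * p * a * p⁻¹ * a⁻¹ = b := ⟨_, rfl⟩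
  have hb2 : b ^ 2 = q :=
    calc b ^ 2 = a * (p * (a * a) * p⁻¹) * a⁻¹ := by rw [← hb, sq]; group
      _ = a * (q * i) * a⁻¹ := by rw [← sq, hi, hpi]
      _ = a * q * a⁻¹ * (a * a) := by rw [← hi, sq]; group
      _ = q * i ^ 2 * z := by
        rw [haq, ← sq, hi, hiq, mul_assoc (q * i) z i, (hz.commute i).eq, sq]; group
      _ = q := by rw [hi2, mul_assoc, hz.mul_self, mul_one]
  obtain ⟨ζ, hζc, hζ2, hbζ⟩ : ∃ ζ : G, (∀ g, Commute ζ g) ∧ ζ ^ 2 = 1 ∧ b = p * ζ := by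
    rcases hz.eq_or_eq_mul_of_sq_eq hG (hq.trans hb2.symm) (hp ▸ hz.ne_one) with h | h
    · exact ⟨1, Commute.one_left, one_pow 2, by rw [h, mul_one]⟩
    · exact ⟨z, hz.commute, hz.sq_eq_one, h⟩
  have hcube : (a * p) ^ 3 = ζ * z :=
    calc (a * p) ^ 3 = b * (a * (q * a * q⁻¹) * q) * p := by rw [pow_three, ← hb, ← hq, sq]; group
      _ = ζ * p ^ 4 := by rw [hqa, hbζ, ← (hζc p).eq, ← hq]; group
      _ = ζ * z := by rw [hp]
  have hap : Commute a p := hz.commute_of_mul_sq_eq_one <|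
    hG.pow_eq_one_of_pow_mul_eq_one (m := 3) (by norm_num) <| by
      rw [mul_comm, pow_mul, hcube, (hζc z).mul_pow, hζ2, hz.sq_eq_one, one_mul]
  rw [← hi, ← hq, (hap.pow_pow 2 2).eq] at hiq
  exact hz.ne_one (by simpa using hiq)

theorem commute_sq_of_pow_four_eq (hz : IsUniqueInvolution z) (hG : IsPGroup 2 G) {a p : G}
    (ha : a ^ 4 = z) (hp : p ^ 4 = z) : Commute (a ^ 2) (p ^ 2) := by
  obtain ⟨i, hi⟩ : ∃ i, a ^ 2 = i := ⟨_, rfl⟩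
  obtain ⟨q, hq⟩ : ∃ q, p ^ 2 = q := ⟨_, rfl⟩
  obtain ⟨c, hc⟩ : ∃ c, q * i = c := ⟨_, rfl⟩
  rw [hi, hq]
  have hi2 : i ^ 2 = z := by rw [← hi, ← pow_mul]; exact ha
  have hq2 : q ^ 2 = z := by rw [← hq, ← pow_mul]; exact hp
  have hic : i * c * i⁻¹ = c⁻¹ :=
    calc i * c * i⁻¹ = i * q := by rw [← hc]; group
      _ = (i * z) * (q * z) := by
        rw [← (hz.commute q).eq, mul_assoc, ← mul_assoc z z, hz.mul_self, one_mul]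
      _ = c⁻¹ := by
        rw [← hz.inv_eq_mul_of_sq_eq hi2, ← hz.inv_eq_mul_of_sq_eq hq2, ← mul_inv_rev, hc]
  by_contra hnc
  have hc2 : c ^ 2 ≠ 1 := fun h => hnc <| by
    have hcc : c⁻¹ = c := inv_eq_of_mul_eq_one_right (by rw [← sq, h])
    calc i * q = i * c * i⁻¹ := by rw [← hc]; group
      _ = q * i := by rw [hic, hcc, hc]
  -- either `c` has order 4, or some power of `c` has order 8; in both cases `i` inverts a square
  -- root of `z`, i.e. anticommutes with it
  by_cases hc4 : c ^ 4 = 1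
  · have hcz : c ^ 2 = z := (hz.eq_one_or_eq_of_sq_eq_one (by rwa [← pow_mul])).resolve_left hc2
    refine hz.sq_mul_sq_ne_of_pow_four_eq hG ha hp (mul_right_cancel (b := i) ?_)
    rw [hi, hq, mul_assoc, hc, (hz.conj_eq_inv_iff hcz).mp hic, mul_assoc c i,
      ← (hz.commute i).eq, ← mul_assoc]
  · obtain ⟨n, hn⟩ := hz.exists_pow_pow_eq hG (g := c) (k := 2) hc4
    refine hz.sq_mul_sq_ne_of_pow_four_eq hG ha hn ?_
    rw [hi, ← hz.conj_eq_inv_iff (by rw [← pow_mul]; exact hn), ← conj_pow, ← conj_pow, hic,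
      inv_pow, inv_pow]

theorem mem_zpowers_of_pow_four_eq (hz : IsUniqueInvolution z) (hG : IsPGroup 2 G) {a s : G}
    (ha : a ^ 4 = z) (hs : s ^ 4 = z) : s ∈ Subgroup.zpowers a := by
  have ha4 : a ^ 4 ≠ 1 := ha ▸ hz.ne_one
  have hzA : z ∈ Subgroup.zpowers a := ha ▸ Subgroup.npow_mem_zpowers a 4
  have hsq : (a ^ 2) ^ 2 = (s ^ 2) ^ 2 := by rw [← pow_mul, ← pow_mul, ha, hs]
  rcases hz.eq_or_eq_mul_of_commute (hz.commute_sq_of_pow_four_eq hG ha hs) hsq with h | h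
  · rcases hz.eq_or_eq_mul_of_sq_eq hG h.symm ha4 with h' | h' <;> rw [h']
    · exact Subgroup.mem_zpowers a
    · exact mul_mem (Subgroup.mem_zpowers a) hzA
  · have hinv : a⁻¹ ^ 2 = s ^ 2 := by
      rw [h, inv_pow, hz.inv_eq_mul_of_sq_eq (by rw [← pow_mul]; exact ha)]
    rcases hz.eq_or_eq_mul_of_sq_eq hG hinv (by rwa [inv_pow, inv_ne_one]) with h' | h' <;> rw [h']
    · exact inv_mem (Subgroup.mem_zpowers a)
    · exact mul_mem (inv_mem (Subgroup.mem_zpowers a)) hzA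

theorem exists_pow_eq_of_commute (hz : IsUniqueInvolution z) (hG : IsPGroup 2 G) {v w : G}
    (hvw : Commute v w) (hle : orderOf v ≤ orderOf w) : ∃ n : ℕ, w ^ n = v := by
  obtain ⟨m, hm⟩ := IsPGroup.iff_orderOf.mp hG v
  induction m generalizing v with
  | zero => exact ⟨0, by rw [pow_zero, orderOf_eq_one_iff.mp hm]⟩
  | succ m ih =>
    have hm2 : orderOf (v ^ 2) = 2 ^ m := by
      rw [orderOf_pow_of_dvd two_ne_zero (hm ▸ dvd_pow_self 2 m.succ_ne_zero), hm, pow_succ,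
        Nat.mul_div_cancel _ two_pos]
    have hlt : 2 ^ m < orderOf w :=
      (Nat.pow_lt_pow_right one_lt_two m.lt_succ_self).trans_le (hm ▸ hle)
    obtain ⟨t, ht⟩ := ih (hvw.pow_left 2) (hm2 ▸ hlt.le) hm2
    obtain ⟨s, rfl⟩ : Even t := hG.even_of_orderOf_pow_lt (by rwa [ht, hm2])
    obtain ⟨r, hr⟩ : ∃ r : ℕ, w ^ r = z := by
      simpa using hz.exists_pow_pow_eq hG (k := 0) (g := w) fun h => by
        rw [pow_zero, pow_one] at h
        rw [h, orderOf_one] at hlt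
        exact Nat.one_le_two_pow.not_gt hlt
    rcases hz.eq_or_eq_mul_of_commute (hvw.symm.pow_left s) (by rw [← pow_mul, mul_two, ht])
      with h | h
    · exact ⟨s, h.symm⟩
    · exact ⟨s + r, by rw [pow_add, hr, h]⟩

theorem exists_mem_pow_four_eq (hz : IsUniqueInvolution z) (hG : IsPGroup 2 G) {A : Subgroup G}
    [IsMulCommutative A] (hbig : 8 ≤ (A : Set G).encard) : ∃ a ∈ A, a ^ 4 = z := by
  classical
  by_contra! h
  have h4 : ∀ v ∈ A, (v ^ 2) ^ 2 = 1 := fun v hv => by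
    by_contra hv4
    obtain ⟨n, hn⟩ := hz.exists_pow_pow_eq hG (k := 2) (by rwa [← pow_mul] at hv4)
    exact h _ (A.pow_mem hv n) hn
  obtain ⟨w, hw⟩ : ∃ w, ∀ v ∈ A, v ^ 2 = z → v = w ∨ v = w * z := by
    by_cases hex : ∃ w ∈ A, w ^ 2 = z
    · obtain ⟨w, hwA, hw⟩ := hex
      exact ⟨w, fun v hv hv2 => hz.eq_or_eq_mul_of_commute
        (setLike_mul_comm hwA hv) (hw.trans hv2.symm)⟩
    · push Not at hex
      exact ⟨1, fun v hv hv2 => absurd hv2 (hex v hv)⟩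
  have hsub : (A : Set G) ⊆ ({1, z, w, w * z} : Finset G) := by
    intro v hv
    rcases hz.eq_one_or_eq_of_sq_eq_one (h4 v hv) with h2 | h2
    · rcases hz.eq_one_or_eq_of_sq_eq_one h2 with rfl | rfl <;> simp
    · rcases hw v hv h2 with rfl | rfl <;> simp
  have h8 := hbig.trans (Set.encard_le_encard hsub)
  rw [Set.encard_coe_eq_coe_finsetCard] at h8
  have := Finset.card_le_four (a := 1) (b := z) (c := w) (d := w * z)
  norm_cast at h8
  omega

end IsUniqueInvolution

structure Subgroup.IsMaximalAbelian (A : Subgroup G) : Prop where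
  isMulCommutative : IsMulCommutative A
  eq_of_le : ∀ B : Subgroup G, IsMulCommutative B → A ≤ B → B = A

namespace Subgroup.IsMaximalAbelian

variable {A : Subgroup G} {z : G}

theorem commute_of_mem (hA : A.IsMaximalAbelian) {x y : G} (hx : x ∈ A) (hy : y ∈ A) :
    Commute x y :=
  have := hA.isMulCommutative
  setLike_mul_comm hx hy

theorem mem_of_forall_commute (hA : A.IsMaximalAbelian) {u : G} (hu : ∀ v ∈ A, Commute u v) :
    u ∈ A := by
  have hcomm : ∀ x ∈ insert u (A : Set G), ∀ y ∈ insert u (A : Set G), x * y = y * x := by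
    rintro x (rfl | hx) y (rfl | hy)
    · rfl
    · exact hu y hy
    · exact (hu x hx).eq.symm
    · exact hA.commute_of_mem hx hy
  have hB := hA.eq_of_le _ (Subgroup.isMulCommutative_closure hcomm)
    fun x hx => Subgroup.subset_closure (Set.mem_insert_of_mem u hx)
  exact hB ▸ Subgroup.subset_closure (Set.mem_insert u _)

theorem involution_mem (hA : A.IsMaximalAbelian) (hz : IsUniqueInvolution z) : z ∈ A :=
  hA.mem_of_forall_commute fun v _ => hz.commute v

theorem mem_of_sq_mem (hA : A.IsMaximalAbelian) (hz : IsUniqueInvolution z) (hG : IsPGroup 2 G)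
    {u : G} (hu : u ^ 2 ∈ A) (hu4 : u ^ 4 ≠ 1) : u ∈ A := by
  by_cases h : ∃ v ∈ A, orderOf (u ^ 2) < orderOf v
  · -- `u ^ 2` is a power of `v` of smaller order, so it is the square of a power of `v`
    obtain ⟨v, hv, hlt⟩ := h
    obtain ⟨t, ht⟩ := hz.exists_pow_eq_of_commute hG (hA.commute_of_mem hu hv) hlt.le
    obtain ⟨s, rfl⟩ : Even t := hG.even_of_orderOf_pow_lt (by rwa [ht])
    have hsq : (v ^ s) ^ 2 = u ^ 2 := by rw [← pow_mul, mul_two, ht]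
    have hs4 : (v ^ s) ^ 4 ≠ 1 := by rwa [show 4 = 2 * 2 from rfl, pow_mul, hsq, ← pow_mul]
    rcases hz.eq_or_eq_mul_of_sq_eq hG hsq hs4 with h | h <;> rw [h]
    · exact A.pow_mem hv s
    · exact A.mul_mem (A.pow_mem hv s) (hA.involution_mem hz)
  · push Not at h
    refine hA.mem_of_forall_commute fun v hv => ?_
    obtain ⟨n, rfl⟩ := hz.exists_pow_eq_of_commute hG (hA.commute_of_mem hv hu) (h v hv)
    exact (Commute.self_pow u 2).pow_right n

theorem mem_of_pow_four_ne_one (hA : A.IsMaximalAbelian) (hz : IsUniqueInvolution z)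
    (hG : IsPGroup 2 G) (h8 : ∃ a ∈ A, a ^ 4 = z) {u : G} (hu : u ^ 4 ≠ 1) : u ∈ A := by
  obtain ⟨a, haA, ha⟩ := h8
  refine hG.induction_on_pow (P := fun u => u ^ 4 ≠ 1 → u ∈ A) 3 (fun u hu8 hu4 => ?_)
    (fun u _ ih hu4 => ?_) u hu
  · have hu4z : u ^ 4 = z := (hz.eq_one_or_eq_of_sq_eq_one (by rwa [← pow_mul])).resolve_left hu4
    exact Subgroup.zpowers_le.mpr haA (hz.mem_zpowers_of_pow_four_eq hG ha hu4z)
  · exact hA.mem_of_sq_mem hz hG (ih (by rwa [← pow_mul])) hu4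

theorem sq_eq_of_notMem (hA : A.IsMaximalAbelian) (hz : IsUniqueInvolution z)
    (hG : IsPGroup 2 G) (h8 : ∃ a ∈ A, a ^ 4 = z) {x : G} (hx : x ∉ A) : x ^ 2 = z := by
  have hx4 : (x ^ 2) ^ 2 = 1 := by
    by_contra h
    exact hx (hA.mem_of_pow_four_ne_one hz hG h8 (by rwa [← pow_mul] at h))
  refine (hz.eq_one_or_eq_of_sq_eq_one hx4).resolve_left fun h => hx ?_
  rcases hz.eq_one_or_eq_of_sq_eq_one h with rfl | rfl
  · exact A.one_mem
  · exact hA.involution_mem hz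

theorem conj_eq_inv_of_notMem (hA : A.IsMaximalAbelian) (hz : IsUniqueInvolution z)
    (hG : IsPGroup 2 G) (h8 : ∃ a ∈ A, a ^ 4 = z) {x v : G} (hx : x ∉ A) (hv : v ∈ A) :
    x * v * x⁻¹ = v⁻¹ := by
  have hx2 := hA.sq_eq_of_notMem hz hG h8 hx
  have hxa : ∀ {a : G}, a ^ 4 = z → x * a * x⁻¹ ∈ A := fun ha =>
    hA.mem_of_pow_four_ne_one hz hG h8 (by rw [conj_pow, ha, hz.conj_eq]; exact hz.ne_one)
  obtain ⟨a, haA, ha⟩ := h8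
  have hi2 : (a ^ 2) ^ 2 = z := by rw [← pow_mul]; exact ha
  have hxi : x * a ^ 2 * x⁻¹ = (a ^ 2)⁻¹ := by
    have hsq : (a ^ 2) ^ 2 = (x * a ^ 2 * x⁻¹) ^ 2 := by rw [conj_pow, hi2, hz.conj_eq]
    rcases hz.eq_or_eq_mul_of_commute (hA.commute_of_mem (A.pow_mem haA 2)
      (by rw [← conj_pow]; exact A.pow_mem (hxa ha) 2)) hsq with h | h
    · refine absurd ?_ hx
      have hcomm : Commute (a ^ 2) x := (mul_inv_eq_iff_eq_mul.mp h : Commute x (a ^ 2)).symm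
      rcases hz.eq_or_eq_mul_of_commute hcomm (hi2.trans hx2.symm) with h' | h' <;> rw [h']
      · exact A.pow_mem haA 2
      · exact A.mul_mem (A.pow_mem haA 2) (hA.involution_mem hz)
    · rw [h, hz.inv_eq_mul_of_sq_eq hi2]
  refine hG.induction_on_pow (P := fun v => v ∈ A → x * v * x⁻¹ = v⁻¹) 2 (fun v hv4 hv => ?_)
    (fun v hv4 ih hv => ?_) v hv
  · obtain ⟨n, rfl⟩ := hz.exists_pow_eq_of_commute hG (hA.commute_of_mem hv (A.pow_mem haA 2))
      (hz.orderOf_eq_four_of_sq_eq hi2 ▸ orderOf_le_of_pow_eq_one (by norm_num) hv4)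
    rw [← conj_pow, hxi, inv_pow]
  · exact hz.conj_eq_inv_of_conj_sq_eq_inv hG hx2 hv4 (ih (A.pow_mem hv 2))

theorem mul_mem_of_notMem (hA : A.IsMaximalAbelian) (hz : IsUniqueInvolution z)
    (hG : IsPGroup 2 G) (h8 : ∃ a ∈ A, a ^ 4 = z) {x y : G} (hx : x ∉ A) (hy : y ∉ A) :
    x * y ∈ A :=
  hA.mem_of_forall_commute fun v hv => mul_inv_eq_iff_eq_mul.mp <|
    calc x * y * v * (x * y)⁻¹ = x * (y * v * y⁻¹) * x⁻¹ := by group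
      _ = v := by rw [hA.conj_eq_inv_of_notMem hz hG h8 hy hv,
        hA.conj_eq_inv_of_notMem hz hG h8 hx (inv_mem hv), inv_inv]

theorem index_eq_two (hA : A.IsMaximalAbelian) (hz : IsUniqueInvolution z)
    (hG : IsPGroup 2 G) (h8 : ∃ a ∈ A, a ^ 4 = z) {x : G} (hx : x ∉ A) : A.index = 2 := by
  refine Subgroup.index_eq_two_iff.mpr ⟨x, fun b => ?_⟩
  by_cases hb : b ∈ A
  · exact .inr ⟨hb, fun h => hx ((A.mul_mem_cancel_left hb).mp h)⟩
  · exact .inl ⟨hA.mul_mem_of_notMem hz hG h8 hb hx, hb⟩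

end Subgroup.IsMaximalAbelian

end

theorem stmt_12_general (G : Type*) [Group G] (hG : IsPGroup 2 G)
    (hna : ∃ x y : G, x * y ≠ y * x) (huniq : ∃! x : G, orderOf x = 2)
    (A : Subgroup G) (hA : IsMulCommutative A)
    (hmax : ∀ B : Subgroup G, IsMulCommutative B → A ≤ B → B = A)
    (hbig : 8 ≤ (A : Set G).encard) :
    (∀ x : G, x ∉ A → orderOf x = 4) ∧ A.Normal ∧ A.index = 2 := by
  obtain ⟨z, hz⟩ := isUniqueInvolution_of_existsUnique huniq
  have hA' : A.IsMaximalAbelian := ⟨hA, hmax⟩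
  have h8 : ∃ a ∈ A, a ^ 4 = z := hz.exists_mem_pow_four_eq hG hbig
  obtain ⟨x, hx⟩ : ∃ x, x ∉ A := by
    by_contra! h
    obtain ⟨x, y, hxy⟩ := hna
    exact hxy (hA'.commute_of_mem (h x) (h y))
  have hindex := hA'.index_eq_two hz hG h8 hx
  exact ⟨fun y hy => hz.orderOf_eq_four_of_sq_eq (hA'.sq_eq_of_notMem hz hG h8 hy),
    Subgroup.normal_of_index_eq_two hindex, hindex⟩

/-- In an infinite non-abelian 2-group `G` with a unique element of order 2, if `A` is a
maximal abelian subgroup with at least 8 elements, then every element of `G` outside `A`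
has order 4, and `A` is a normal subgroup of index 2. -/
theorem stmt_12 (G : Type*) [Group G] [Infinite G] (hG : IsPGroup 2 G)
    (hna : ∃ x y : G, x * y ≠ y * x) (huniq : ∃! x : G, orderOf x = 2)
    (A : Subgroup G) (hA : IsMulCommutative A)
    (hmax : ∀ B : Subgroup G, IsMulCommutative B → A ≤ B → B = A)
    (hbig : 8 ≤ (A : Set G).encard) :
    (∀ x : G, x ∉ A → orderOf x = 4) ∧ A.Normal ∧ A.index = 2 :=
  stmt_12_general G hG hna huniq A hA hmax hbig
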